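/- arXiv:1504.04726 — 2 statements merged into one kernel-verified Lean document; each statement's English description precedes it below -/
import Mathlib

section
/- With parameters a = 1, b = 2, c = 6, d = 1, and running parameters γ₁ = 5, γ₂ = -59/12, condition (1): γ₂ > ρ²/(2b) - (a(2a+b-2d)²/(8b) + a²)γ₁, where ρ² = a²/((a-b)(b+d)+ac), holds (i.e., -59/12 > -37/6), yet γ₃⁽¹⁾ := (2a²+ab)γ₁ - (1/2)·√(-16aγ₁(ρ² - 2a²bγ₁ - 2bγ₂)) equals 20, so for every N < 2ad = 2 the inequality γ₃⁽¹⁾ ≤ Nγ₁ fails; hence condition (1) does not imply γ₃⁽¹⁾ ≤ Nγ₁ ≤ γ₃⁽²⁾. -/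
/-- Counterexample to Chen–Yang's implication: with a=1, b=2, c=6, d=1,
γ₁=5, γ₂=-59/12, condition (1) holds but γ₃⁽¹⁾ = 20, so γ₃⁽¹⁾ ≤ Nγ₁ fails
for every N < 2ad = 2. -/
theorem stmt0 :
    let a : ℝ := 1; let b : ℝ := 2; let c : ℝ := 6; let d : ℝ := 1
    let γ₁ : ℝ := 5; let γ₂ : ℝ := -59/12
    let ρ2 : ℝ := a^2 / ((a - b) * (b + d) + a * c)
    let γ₃₁ : ℝ := (2*a^2 + a*b) * γ₁ -
      Real.sqrt (-16 * a * γ₁ * (ρ2 - 2*a^2*b*γ₁ - 2*b*γ₂)) / 2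
    (γ₂ > ρ2 / (2*b) - (a * (2*a + b - 2*d)^2 / (8*b) + a^2) * γ₁) ∧
    γ₃₁ = 20 ∧
    ∀ N : ℝ, N < 2*a*d → ¬ (γ₃₁ ≤ N * γ₁) := by
  intro a b c d γ₁ γ₂ ρ2 γ₃₁
  have harg : (-16 * a * γ₁ * (ρ2 - 2*a^2*b*γ₁ - 2*b*γ₂) : ℝ) = 0 := by
    simp only [a, b, c, d, γ₁, γ₂, ρ2]; norm_num
  have hγ : γ₃₁ = 20 := by
    simp only [γ₃₁, harg, Real.sqrt_zero]
    simp only [a, b, γ₁]; norm_num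
  refine ⟨?_, hγ, ?_⟩
  · simp only [a, b, c, d, γ₁, γ₂, ρ2]; norm_num
  · intro N hN h
    rw [hγ] at h
    simp only [a, d, γ₁] at hN h
    nlinarith
end

section
/- Under the change of variables x → hx, y → hy, z → hz, t → h⁻¹t with h = a ≠ 0, the Chen system ẋ = a(y-x), ẏ = (c-a)x + cy - xz, ż = -bz + xy is transformed into the generalized Lorenz system ẋ' = A(y'-x'), ẏ' = Cx' + Dy' - x'z', ż' = -Bz' + x'y' with A = 1, B = b/a, C = (c-a)/a, D = c/a. Precisely: if (x(t), y(t), z(t)) solves the Chen system, then (u(s), v(s), w(s)) := (x(s/a)/a, y(s/a)/a, z(s/a)/a) solves the rescaled system. -/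
theorem HasDerivAt.comp_div_const_div_const {𝕜 : Type*} [NontriviallyNormedField 𝕜]
    {f : 𝕜 → 𝕜} {f' a s : 𝕜} (hf : HasDerivAt f f' (s / a)) :
    HasDerivAt (fun s => f (s / a) / a) (f' / a ^ 2) s :=
  ((hf.comp s ((hasDerivAt_id s).div_const a)).div_const a).congr_deriv (by ring)

/-- The rescaling (u,v,w)(s) = (x(s/a)/a, y(s/a)/a, z(s/a)/a), a ≠ 0,
maps solutions of the Chen system ẋ = a(y-x), ẏ = (c-a)x + cy - xz,
ż = -bz + xy to solutions of the generalized Lorenz system with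
A = 1, B = b/a, C = (c-a)/a, D = c/a. -/
theorem stmt3 (a b c : ℝ) (ha : a ≠ 0) (x y z : ℝ → ℝ)
    (hx : ∀ t, HasDerivAt x (a * (y t - x t)) t)
    (hy : ∀ t, HasDerivAt y ((c - a) * x t + c * y t - x t * z t) t)
    (hz : ∀ t, HasDerivAt z (-b * z t + x t * y t) t) :
    let u : ℝ → ℝ := fun s => x (s / a) / a
    let v : ℝ → ℝ := fun s => y (s / a) / a
    let w : ℝ → ℝ := fun s => z (s / a) / a
    (∀ s, HasDerivAt u (1 * (v s - u s)) s) ∧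
    (∀ s, HasDerivAt v ((c - a) / a * u s + c / a * v s - u s * w s) s) ∧
    (∀ s, HasDerivAt w (-(b / a) * w s + u s * v s) s) := by
  intro u v w
  refine ⟨fun s => ?_, fun s => ?_, fun s => ?_⟩
  · exact (hx (s / a)).comp_div_const_div_const.congr_deriv (by simp only [u, v]; field_simp)
  · exact (hy (s / a)).comp_div_const_div_const.congr_deriv (by simp only [u, v, w]; field_simp)
  · exact (hz (s / a)).comp_div_const_div_const.congr_deriv (by simp only [u, v, w]; field_simp)
end
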